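/- Let P be a shift-invariant measure on Ω = A^ℕ satisfying upper decoupling (UD) with nondecreasing sequence (τ_n) satisfying τ_n = o(n) and C_n = e^{o(n)}. Then limsup_{n→∞} (1/n) ln P{x : R_n(x) < n} ≤ γ₊, where γ₊ = lim_{n→∞} (1/n) sup_{u∈A^n} ln P_n(u). -/

import Mathlib

open MeasureTheory Filter Set
open scoped ENNReal

namespace RT

variable {A : Type*}

/-- The left shift on one-sided sequences. -/
def shift (x : ℕ → A) : ℕ → A := fun n => x (n + 1)

/-- The cylinder set of a finite word. -/
def cyl {n : ℕ} (u : Fin n → A) : Set (ℕ → A) := {x | ∀ i : Fin n, x i = u i}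

/-- Cylinder probability `P_n(u) = P([u])`. -/
noncomputable def cylP [MeasurableSpace A] (P : Measure (ℕ → A)) {n : ℕ}
    (u : Fin n → A) : ℝ := (P (cyl u)).toReal

/-- Events depending only on the first `n` coordinates. -/
def FnSet (n : ℕ) (s : Set (ℕ → A)) : Prop :=
  ∃ S : Set (Fin n → A), s = {x | (fun i : Fin n => x i) ∈ S}

/-- Waiting time `W_n(u,y)`, with value `⊤` if `u` never occurs in `y`. -/
noncomputable def waitTime {n : ℕ} (u : Fin n → A) (y : ℕ → A) : ℕ∞ :=
  sInf {m : ℕ∞ | ∃ j : ℕ, m = (j : ℕ∞) + 1 ∧ ∀ i : Fin n, y (j + (i : ℕ)) = u i}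

/-- Return time `R_n(x)`. -/
noncomputable def returnTime (n : ℕ) (x : ℕ → A) : ℕ∞ :=
  sInf {m : ℕ∞ | ∃ k : ℕ, m = (k : ℕ∞) + 1 ∧ ∀ i : Fin n, x (k + 1 + (i : ℕ)) = x i}

/-- Nonoverlapping return time `V_n(x)`. -/
noncomputable def vTime (n : ℕ) (x : ℕ → A) : ℕ∞ :=
  sInf {m : ℕ∞ | ∃ k : ℕ, m = (k : ℕ∞) + 1 ∧ ∀ i : Fin n, x (n + k + (i : ℕ)) = x i}

/-- Extended logarithm, with `elog 0 = ⊥` and `elog ⊤ = ⊤`. -/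
noncomputable def elog (x : ℝ≥0∞) : EReal :=
  if x = 0 then ⊥ else if x = ⊤ then ⊤ else ((Real.log x.toReal : ℝ) : EReal)

/-- Periodic extension of a word of positive length. -/
def perExt {m : ℕ} (hm : 0 < m) (w : Fin m → A) : ℕ → A :=
  fun i => w ⟨i % m, Nat.mod_lt i hm⟩

/-- The cylinder determined by the first `m` values of `f`. -/
def cylOf (m : ℕ) (f : ℕ → A) : Set (ℕ → A) := {x | ∀ i < m, x i = f i}

/-- Upper decoupling in event form. -/
def UDE [MeasurableSpace A] (P : Measure (ℕ → A)) (τ : ℕ → ℕ) (C : ℕ → ℝ) : Prop :=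
  ∀ n : ℕ, 0 < n → ∀ s : Set (ℕ → A), FnSet n s → ∀ B : Set (ℕ → A), MeasurableSet B →
    (P (s ∩ (shift^[n + τ n]) ⁻¹' B)).toReal ≤ C n * (P s).toReal * (P B).toReal

/-- Selective lower decoupling in event form. -/
def SLDE [MeasurableSpace A] (P : Measure (ℕ → A)) (τ : ℕ → ℕ) (C : ℕ → ℝ) : Prop :=
  ∀ n : ℕ, 0 < n → ∀ s : Set (ℕ → A), FnSet n s → ∀ B : Set (ℕ → A), MeasurableSet B →
    ∃ ℓ ≤ τ n, (C n)⁻¹ * (P s).toReal * (P B).toReal ≤ (P (s ∩ (shift^[n + ℓ]) ⁻¹' B)).toReal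

/-- Upper decoupling (word form). -/
def UD [MeasurableSpace A] (P : Measure (ℕ → A)) (τ : ℕ → ℕ) (C : ℕ → ℝ) : Prop :=
  ∀ (n m : ℕ), 0 < n → 0 < m → ∀ (u : Fin n → A) (v : Fin m → A) (ξ : Fin (τ n) → A),
    cylP P (Fin.append (Fin.append u ξ) v) ≤ C n * cylP P u * cylP P v

/-- Selective lower decoupling (word form). -/
def SLD [MeasurableSpace A] (P : Measure (ℕ → A)) (τ : ℕ → ℕ) (C : ℕ → ℝ) : Prop :=
  ∀ (n m : ℕ), 0 < n → 0 < m → ∀ (u : Fin n → A) (v : Fin m → A),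
    ∃ ℓ ≤ τ n, ∃ ξ : Fin ℓ → A,
      (C n)⁻¹ * cylP P u * cylP P v ≤ cylP P (Fin.append (Fin.append u ξ) v)

/-- Period of a finite word. -/
noncomputable def wordPeriod {m : ℕ} (u : Fin m → A) : ℕ :=
  sInf {p : ℕ | 1 ≤ p ∧ ∀ (i : ℕ) (h : i + p < m), u ⟨i, by omega⟩ = u ⟨i + p, h⟩}

/-- Legendre–Fenchel transform of an `EReal`-valued function on `ℝ`. -/
noncomputable def LF (f : ℝ → EReal) (α : ℝ) : EReal := ⨆ s : ℝ, ((α * s : ℝ) : EReal) - f s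

/-- The waiting-time rate function built from `IQ`. -/
noncomputable def IW (IQ : ℝ → EReal) (s : ℝ) : EReal :=
  if s < 0 then ⊤ else ⨅ r : {r : ℝ // s ≤ r}, ((r.1 - s : ℝ) : EReal) + IQ r.1


section Aux

variable {A : Type*} [Fintype A] [Nonempty A] [MeasurableSpace A]

/-- The measurable atom of a point. -/
def atm (a : A) : Set A := ⋂₀ {S : Set A | MeasurableSet S ∧ a ∈ S}

lemma measurableSet_atm (a : A) : MeasurableSet (atm a) := by
  refine MeasurableSet.sInter ?_ fun S hS => hS.1
  exact (Set.toFinite _).countable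

lemma mem_atm_self (a : A) : a ∈ atm a := fun S hS => hS.2

lemma atm_subset {a : A} {S : Set A} (hS : MeasurableSet S) (ha : a ∈ S) : atm a ⊆ S :=
  Set.sInter_subset_of_mem ⟨hS, ha⟩

lemma atm_eq_of_mem {a b : A} (h : b ∈ atm a) : atm b = atm a := by
  apply Set.Subset.antisymm
  · intro c hc S hS
    exact hc _ ⟨hS.1, atm_subset hS.1 hS.2 h⟩
  · intro c hc S hS
    have haS : a ∈ S := by
      by_contra hna
      exact atm_subset hS.1.compl hna h hS.2
    exact hc _ ⟨hS.1, haS⟩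

/-- Setoid identifying points with the same atom. -/
def atmSetoid (A : Type*) [Fintype A] [MeasurableSpace A] : Setoid A :=
  ⟨fun a b => atm a = atm b, ⟨fun _ => rfl, Eq.symm, Eq.trans⟩⟩

/-- A choice of representative of each atom. -/
noncomputable def rep (a : A) : A := (Quotient.mk (atmSetoid A) a).out

lemma atm_rep (a : A) : atm (rep a) = atm a := Quotient.mk_out (s := atmSetoid A) a

lemma rep_eq_of_atm_eq {a b : A} (h : atm a = atm b) : rep a = rep b := by
  unfold rep
  rw [Quotient.sound (s := atmSetoid A) h]

lemma rep_rep (a : A) : rep (rep a) = rep a := rep_eq_of_atm_eq (atm_rep a)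

lemma mem_atm_rep (a : A) : a ∈ atm (rep a) := (atm_rep a) ▸ mem_atm_self a

/-- Measurable sets do not separate sequences that are atom-wise equivalent. -/
lemma mem_iff_of_atm_rel {M : Set (ℕ → A)} (hM : MeasurableSet M)
    {x y : ℕ → A} (h : ∀ i, y i ∈ atm (x i)) : x ∈ M ↔ y ∈ M := by
  let m' : MeasurableSpace (ℕ → A) :=
    { MeasurableSet' := fun M => ∀ x y : ℕ → A, (∀ i, y i ∈ atm (x i)) → (x ∈ M ↔ y ∈ M)
      measurableSet_empty := fun _ _ _ => Iff.rfl
      measurableSet_compl := fun s hs x y hr => not_congr (hs x y hr)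
      measurableSet_iUnion := fun f hf x y hr => by
        simp only [Set.mem_iUnion]
        exact exists_congr fun i => hf i x y hr }
  have hle : (MeasurableSpace.pi : MeasurableSpace (ℕ → A)) ≤ m' := by
    have hpi : (MeasurableSpace.pi : MeasurableSpace (ℕ → A)) =
        ⨆ i : ℕ, MeasurableSpace.comap (fun x : ℕ → A => x i) inferInstance := rfl
    rw [hpi]
    refine iSup_le fun i => ?_
    intro M hM
    obtain ⟨S, hS, rfl⟩ := hM
    intro x y hr
    constructor
    · intro hx
      exact atm_subset hS hx (hr i)
    · intro hy
      have h2 : x i ∈ atm (y i) := by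
        rw [atm_eq_of_mem (hr i)]
        exact mem_atm_self _
      exact atm_subset hS hy h2
  exact hle M hM x y h

/-- The atomic cylinder determined by a word. -/
def aCyl {m : ℕ} (u : Fin m → A) : Set (ℕ → A) := {x | ∀ i : Fin m, x i ∈ atm (u i)}

lemma measurableSet_aCyl {m : ℕ} (u : Fin m → A) : MeasurableSet (aCyl u) := by
  have he : aCyl u = ⋂ i : Fin m, (fun x : ℕ → A => x i) ⁻¹' atm (u i) := by
    ext x
    simp [aCyl]
  rw [he]
  exact MeasurableSet.iInter fun i => (measurable_pi_apply _) (measurableSet_atm _)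

/-- The atomic cylinder is a measurable hull of the cylinder. -/
lemma measure_cyl_eq_aCyl (P : Measure (ℕ → A)) {m : ℕ} (u : Fin m → A) :
    P (cyl u) = P (aCyl u) := by
  classical
  refine le_antisymm (measure_mono fun x hx i => ?_) ?_
  · rw [hx i]
    exact mem_atm_self _
  · have hsub : aCyl u ⊆ toMeasurable P (cyl u) := by
      intro y hy
      set x : ℕ → A := fun i => if h : i < m then u ⟨i, h⟩ else y i with hxdef
      have hxc : x ∈ cyl u := by
        intro i
        have hi : (i : ℕ) < m := i.isLt
        simp [hxdef, hi]
      have hrel : ∀ i, y i ∈ atm (x i) := by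
        intro i
        by_cases h : i < m
        · have hx1 : x i = u ⟨i, h⟩ := by simp [hxdef, h]
          rw [hx1]
          exact hy ⟨i, h⟩
        · have hx1 : x i = y i := by simp [hxdef, h]
          rw [hx1]
          exact mem_atm_self _
      exact (mem_iff_of_atm_rel (measurableSet_toMeasurable P _) hrel).mp
        (subset_toMeasurable P _ hxc)
    calc P (aCyl u) ≤ P (toMeasurable P (cyl u)) := measure_mono hsub
      _ = P (cyl u) := measure_toMeasurable _

/-- The maximal cylinder probability at a given length. -/
noncomputable def Sr (P : Measure (ℕ → A)) (m : ℕ) : ℝ :=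
  Finset.univ.sup' Finset.univ_nonempty (fun u : Fin m → A => cylP P u)

lemma cylP_le_Sr (P : Measure (ℕ → A)) {m : ℕ} (u : Fin m → A) :
    cylP P u ≤ Sr P m := Finset.le_sup' _ (Finset.mem_univ u)

lemma Sr_nonneg (P : Measure (ℕ → A)) (m : ℕ) : 0 ≤ Sr P m :=
  le_trans ENNReal.toReal_nonneg (cylP_le_Sr P (Classical.arbitrary _))

lemma Sr_anti (P : Measure (ℕ → A)) [IsProbabilityMeasure P] {m m' : ℕ} (h : m ≤ m') :
    Sr P m' ≤ Sr P m := by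
  refine Finset.sup'_le _ _ fun u _ => ?_
  have hsub : cyl u ⊆ cyl (fun i : Fin m => u (Fin.castLE h i)) := fun x hx i => hx (Fin.castLE h i)
  calc cylP P u ≤ cylP P (fun i : Fin m => u (Fin.castLE h i)) :=
        ENNReal.toReal_mono (measure_ne_top P _) (measure_mono hsub)
    _ ≤ Sr P m := cylP_le_Sr P _

lemma Sr_pos (P : Measure (ℕ → A)) [IsProbabilityMeasure P] (m : ℕ) : 0 < Sr P m := by
  classical
  have h1 : (1 : ℝ≥0∞) ≤ ∑ u : Fin m → A, P (cyl u) := by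
    calc (1 : ℝ≥0∞) = P Set.univ := measure_univ.symm
      _ ≤ P (⋃ u ∈ (Finset.univ : Finset (Fin m → A)), cyl u) :=
          measure_mono fun x _ =>
            Set.mem_biUnion (Finset.mem_univ (fun i : Fin m => x i)) (fun i => rfl)
      _ ≤ ∑ u : Fin m → A, P (cyl u) := measure_biUnion_finset_le _ _
  obtain ⟨u, hu⟩ : ∃ u : Fin m → A, P (cyl u) ≠ 0 := by
    by_contra hc
    push_neg at hc
    rw [Finset.sum_eq_zero fun u _ => hc u] at h1
    exact (by norm_num : ¬ ((1 : ℝ≥0∞) ≤ 0)) h1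
  have hpos : 0 < cylP P u := ENNReal.toReal_pos hu (measure_ne_top P _)
  exact lt_of_lt_of_le hpos (cylP_le_Sr P u)

lemma shift_iterate_apply (g : ℕ) (x : ℕ → A) (i : ℕ) : (shift^[g] x) i = x (i + g) := by
  induction g generalizing x with
  | zero => rfl
  | succ g ih =>
    rw [Function.iterate_succ_apply, ih]
    rfl

/-- The central decoupling estimate for the event of an exact repetition at lag `j`. -/
lemma Ej_bound (P : Measure (ℕ → A)) [IsProbabilityMeasure P]
    (τ : ℕ → ℕ) (C : ℕ → ℝ) (hC1 : ∀ k, 1 ≤ C k) (hUD : UDE P τ C)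
    {n j : ℕ} (hj : 0 < j) :
    (P {x : ℕ → A | ∀ i < n, x (j + i) = x i}).toReal ≤ C j * Sr P (n - τ j) := by
  classical
  set t := n - τ j with ht
  have hvlt : ∀ i : Fin t, (j + τ j + (i : ℕ)) % j < j := fun _ => Nat.mod_lt _ hj
  set vw : (Fin j → A) → (Fin t → A) :=
    fun w i => w ⟨(j + τ j + (i : ℕ)) % j, hvlt i⟩ with hvw
  set R : Finset (Fin j → A) := Finset.univ.filter (fun w => ∀ i, rep (w i) = w i) with hR
  -- the covering
  have hcov : {x : ℕ → A | ∀ i < n, x (j + i) = x i} ⊆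
      ⋃ w ∈ R, (aCyl w ∩ shift^[j + τ j] ⁻¹' aCyl (vw w)) := by
    intro x hx
    have hper : ∀ p, p < n + j → x p = x (p % j) := by
      intro p
      induction p using Nat.strong_induction_on with
      | _ p ih =>
        intro hp
        rcases lt_or_ge p j with h | h
        · rw [Nat.mod_eq_of_lt h]
        · have h1 : p - j < n := by omega
          have h2 : x p = x (p - j) := by
            have h3 := hx (p - j) h1
            rw [show j + (p - j) = p by omega] at h3
            exact h3
          rw [h2, ih (p - j) (by omega) (by omega), Nat.mod_eq_sub_mod h]
    have hwR : (fun i : Fin j => rep (x (i : ℕ))) ∈ R := by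
      simp only [hR, Finset.mem_filter, Finset.mem_univ, true_and]
      intro i
      exact rep_rep _
    refine Set.mem_biUnion hwR ⟨fun i => mem_atm_rep _, ?_⟩
    intro i
    have hi : (i : ℕ) < t := i.isLt
    have hs : (shift^[j + τ j] x) (i : ℕ) = x ((i : ℕ) + (j + τ j)) :=
      shift_iterate_apply _ _ _
    have hcomm : (i : ℕ) + (j + τ j) = j + τ j + (i : ℕ) := by ring
    have h4 : x (j + τ j + (i : ℕ)) = x ((j + τ j + (i : ℕ)) % j) :=
      hper (j + τ j + (i : ℕ)) (by omega)
    show (shift^[j + τ j] x) (i : ℕ) ∈ atm (vw (fun i : Fin j => rep (x (i : ℕ))) i)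
    rw [hs, hcomm, h4]
    exact mem_atm_rep _
  -- pairwise disjointness of the atomic cylinders indexed by representative words
  have hdisj : (R : Set (Fin j → A)).PairwiseDisjoint (fun w => aCyl w) := by
    intro w hwmem w' hw'mem hne
    refine Set.disjoint_left.mpr fun x hx hx' => hne ?_
    simp only [hR, Finset.coe_filter, Set.mem_setOf_eq, Finset.mem_univ, true_and]
      at hwmem hw'mem
    funext i
    have e : atm (w i) = atm (w' i) := by
      rw [← atm_eq_of_mem (hx i), atm_eq_of_mem (hx' i)]
    calc w i = rep (w i) := (hwmem i).symm
      _ = rep (w' i) := rep_eq_of_atm_eq e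
      _ = w' i := hw'mem i
  -- summing
  have hsum1 : ∑ w ∈ R, (P (aCyl w)).toReal ≤ 1 := by
    rw [← ENNReal.toReal_sum (fun w _ => measure_ne_top P _),
      ← measure_biUnion_finset hdisj (fun w _ => measurableSet_aCyl _)]
    simpa using ENNReal.toReal_mono ENNReal.one_ne_top (prob_le_one)
  have hstep : ∀ w ∈ R, (P (aCyl w ∩ shift^[j + τ j] ⁻¹' aCyl (vw w))).toReal ≤
      C j * Sr P t * (P (aCyl w)).toReal := by
    intro w _
    have h1 := hUD j hj (aCyl w) ⟨{c : Fin j → A | ∀ i, c i ∈ atm (w i)}, rfl⟩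
      (aCyl (vw w)) (measurableSet_aCyl _)
    refine le_trans h1 ?_
    have h2 : (P (aCyl (vw w))).toReal ≤ Sr P t := by
      have h3 : cylP P (vw w) = (P (aCyl (vw w))).toReal := by
        unfold cylP
        rw [measure_cyl_eq_aCyl]
      rw [← h3]
      exact cylP_le_Sr P _
    have h4 : 0 ≤ C j * (P (aCyl w)).toReal :=
      mul_nonneg (le_trans zero_le_one (hC1 j)) ENNReal.toReal_nonneg
    calc C j * (P (aCyl w)).toReal * (P (aCyl (vw w))).toReal
        ≤ C j * (P (aCyl w)).toReal * Sr P t := mul_le_mul_of_nonneg_left h2 h4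
      _ = C j * Sr P t * (P (aCyl w)).toReal := by ring
  have hEle : P {x : ℕ → A | ∀ i < n, x (j + i) = x i} ≤
      ∑ w ∈ R, P (aCyl w ∩ shift^[j + τ j] ⁻¹' aCyl (vw w)) :=
    le_trans (measure_mono hcov) (measure_biUnion_finset_le _ _)
  have hfin : ∑ w ∈ R, P (aCyl w ∩ shift^[j + τ j] ⁻¹' aCyl (vw w)) ≠ ⊤ :=
    (ENNReal.sum_lt_top.mpr fun w _ => measure_lt_top P _).ne
  have hCS : 0 ≤ C j * Sr P t := mul_nonneg (le_trans zero_le_one (hC1 j)) (Sr_nonneg P t)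
  calc (P {x : ℕ → A | ∀ i < n, x (j + i) = x i}).toReal
      ≤ (∑ w ∈ R, P (aCyl w ∩ shift^[j + τ j] ⁻¹' aCyl (vw w))).toReal :=
        ENNReal.toReal_mono hfin hEle
    _ = ∑ w ∈ R, (P (aCyl w ∩ shift^[j + τ j] ⁻¹' aCyl (vw w))).toReal :=
        ENNReal.toReal_sum fun w _ => measure_ne_top P _
    _ ≤ ∑ w ∈ R, C j * Sr P t * (P (aCyl w)).toReal := Finset.sum_le_sum hstep
    _ = C j * Sr P t * ∑ w ∈ R, (P (aCyl w)).toReal := by rw [Finset.mul_sum]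
    _ ≤ C j * Sr P t * 1 := mul_le_mul_of_nonneg_left hsum1 hCS
    _ = C j * Sr P t := mul_one _

end Aux

/-- Under upper decoupling (event form, nondecreasing `τ_n = o(n)`,
`C_n = e^{o(n)}`), `limsup_n (1/n) ln P{x : R_n(x) < n} ≤ γ₊`, where
`γ₊ = lim_n (1/n) sup_{u∈Aⁿ} ln P_n(u)` (the limit being assumed to exist). -/
theorem stmt6 {A : Type*} [Fintype A] [Nonempty A] [MeasurableSpace A]
    (P : Measure (ℕ → A)) [IsProbabilityMeasure P]
    (hinv : MeasurePreserving (shift (A := A)) P P)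
    (τ : ℕ → ℕ) (C : ℕ → ℝ)
    (hτmono : Monotone τ) (hC1 : ∀ n, 1 ≤ C n)
    (hτo : Tendsto (fun n : ℕ => (τ n : ℝ) / n) atTop (nhds 0))
    (hCo : Tendsto (fun n : ℕ => Real.log (C n) / n) atTop (nhds 0))
    (hUD : UDE P τ C)
    (γp : ℝ)
    (hγ : Tendsto (fun n : ℕ =>
      Real.log (Finset.univ.sup' Finset.univ_nonempty
        fun u : Fin n → A => cylP P u) / (n : ℝ)) atTop (nhds γp)) :
    Filter.limsup (fun n : ℕ =>
        ((((n : ℝ)⁻¹ : ℝ)) : EReal) * elog (P {x | returnTime n x < (n : ℕ∞)})) atTop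
      ≤ (γp : EReal) := by
  classical
  have hγ' : Tendsto (fun n : ℕ => Real.log (Sr P n) / (n : ℝ)) atTop (nhds γp) := hγ
  -- the running maximum of the decoupling constants
  set Cm : ℕ → ℝ := fun n =>
    (Finset.range (n + 1)).sup' (Finset.nonempty_range_iff.mpr (Nat.succ_ne_zero n)) C with hCm
  have hC_le_Cm : ∀ {j n : ℕ}, j ≤ n → C j ≤ Cm n := fun {j n} h =>
    Finset.le_sup' _ (Finset.mem_range.mpr (by omega))
  have hCm1 : ∀ n, 1 ≤ Cm n := fun n => le_trans (hC1 n) (hC_le_Cm le_rfl)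
  have hCm_pos : ∀ n, (0:ℝ) < Cm n := fun n => lt_of_lt_of_le zero_lt_one (hCm1 n)
  -- inclusion of the short-return event into lag events
  have hsubset : ∀ n : ℕ, {x : ℕ → A | returnTime n x < (n : ℕ∞)} ⊆
      ⋃ j ∈ Finset.Ico 1 n, {x : ℕ → A | ∀ i < n, x (j + i) = x i} := by
    intro n x hx
    simp only [Set.mem_setOf_eq, returnTime] at hx
    obtain ⟨m, hm, hmlt⟩ := sInf_lt_iff.mp hx
    obtain ⟨k, rfl, hk⟩ := hm
    have hkn : k + 1 < n := by exact_mod_cast hmlt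
    refine Set.mem_biUnion (Finset.mem_Ico.mpr ⟨by omega, hkn⟩) ?_
    intro i hi
    exact hk ⟨i, hi⟩
  -- the main quantitative bound
  have hbound : ∀ n : ℕ, 0 < n →
      (P {x | returnTime n x < (n : ℕ∞)}).toReal ≤ (n : ℝ) * Cm n * Sr P (n - τ n) := by
    intro n hn
    have h1 : P {x : ℕ → A | returnTime n x < (n : ℕ∞)} ≤
        ∑ j ∈ Finset.Ico 1 n, P {x : ℕ → A | ∀ i < n, x (j + i) = x i} :=
      le_trans (measure_mono (hsubset n)) (measure_biUnion_finset_le _ _)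
    have hfin : ∑ j ∈ Finset.Ico 1 n, P {x : ℕ → A | ∀ i < n, x (j + i) = x i} ≠ ⊤ :=
      (ENNReal.sum_lt_top.mpr fun j _ => measure_lt_top P _).ne
    have h3 : ∀ j ∈ Finset.Ico 1 n,
        (P {x : ℕ → A | ∀ i < n, x (j + i) = x i}).toReal ≤ Cm n * Sr P (n - τ n) := by
      intro j hjm
      obtain ⟨hj1, hjn⟩ := Finset.mem_Ico.mp hjm
      refine le_trans (Ej_bound P τ C hC1 hUD (by omega)) ?_
      exact mul_le_mul (hC_le_Cm (by omega))
        (Sr_anti P (Nat.sub_le_sub_left (hτmono (by omega : j ≤ n)) n))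
        (Sr_nonneg P _) (le_of_lt (hCm_pos n))
    calc (P {x : ℕ → A | returnTime n x < (n : ℕ∞)}).toReal
        ≤ (∑ j ∈ Finset.Ico 1 n, P {x : ℕ → A | ∀ i < n, x (j + i) = x i}).toReal :=
          ENNReal.toReal_mono hfin h1
      _ = ∑ j ∈ Finset.Ico 1 n, (P {x : ℕ → A | ∀ i < n, x (j + i) = x i}).toReal :=
          ENNReal.toReal_sum fun j _ => measure_ne_top P _
      _ ≤ ∑ _j ∈ Finset.Ico 1 n, Cm n * Sr P (n - τ n) := Finset.sum_le_sum h3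
      _ = ((Finset.Ico 1 n).card : ℝ) * (Cm n * Sr P (n - τ n)) := by
          rw [Finset.sum_const, nsmul_eq_mul]
      _ ≤ (n : ℝ) * (Cm n * Sr P (n - τ n)) := by
          refine mul_le_mul_of_nonneg_right ?_
            (mul_nonneg (le_of_lt (hCm_pos n)) (Sr_nonneg P _))
          rw [Nat.card_Ico]
          exact_mod_cast Nat.sub_le n 1
      _ = (n : ℝ) * Cm n * Sr P (n - τ n) := (mul_assoc _ _ _).symm
  -- the comparison real sequence
  set c : ℕ → ℝ := fun n =>
    (Real.log n + Real.log (Cm n) + Real.log (Sr P (n - τ n))) / n with hc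
  -- eventual domination
  have hfc : ∀ᶠ n : ℕ in atTop, (((n : ℝ)⁻¹ : ℝ) : EReal) * elog (P {x | returnTime n x < (n : ℕ∞)})
      ≤ ((c n : ℝ) : EReal) := by
    filter_upwards [eventually_gt_atTop (0 : ℕ)] with n hn
    by_cases h0 : P {x | returnTime n x < (n : ℕ∞)} = 0
    · rw [h0, show elog (0 : ℝ≥0∞) = ⊥ from if_pos rfl]
      have hb : (((n : ℝ)⁻¹ : ℝ) : EReal) * (⊥ : EReal) = ⊥ := by
        refine EReal.mul_bot_of_pos ?_
        exact_mod_cast inv_pos.mpr (by exact_mod_cast hn : (0:ℝ) < n)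
      rw [hb]
      exact bot_le
    · have hptop : P {x | returnTime n x < (n : ℕ∞)} ≠ ⊤ := measure_ne_top P _
      rw [show elog (P {x | returnTime n x < (n : ℕ∞)}) =
          ((Real.log (P {x | returnTime n x < (n : ℕ∞)}).toReal : ℝ) : EReal) from by
            rw [elog, if_neg h0, if_neg hptop], ← EReal.coe_mul]
      rw [EReal.coe_le_coe_iff]
      have hnpos : (0:ℝ) < n := by exact_mod_cast hn
      have hple := hbound n hn
      have hppos : 0 < (P {x | returnTime n x < (n : ℕ∞)}).toReal :=
        ENNReal.toReal_pos h0 hptop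
      have hb : Real.log (P {x | returnTime n x < (n : ℕ∞)}).toReal ≤
          Real.log ((n : ℝ) * Cm n * Sr P (n - τ n)) := Real.log_le_log hppos hple
      have hsplit : Real.log ((n : ℝ) * Cm n * Sr P (n - τ n)) =
          Real.log n + Real.log (Cm n) + Real.log (Sr P (n - τ n)) := by
        rw [Real.log_mul (mul_pos hnpos (hCm_pos n)).ne' (ne_of_gt (Sr_pos P _)),
          Real.log_mul (ne_of_gt hnpos) (ne_of_gt (hCm_pos n))]
      rw [hsplit] at hb
      calc (n : ℝ)⁻¹ * Real.log (P {x | returnTime n x < (n : ℕ∞)}).toReal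
          ≤ (n : ℝ)⁻¹ * (Real.log n + Real.log (Cm n) + Real.log (Sr P (n - τ n))) :=
            mul_le_mul_of_nonneg_left hb (inv_nonneg.mpr (le_of_lt hnpos))
        _ = c n := by simp only [hc]; rw [inv_mul_eq_div]
  -- the three limits
  have hT1 : Tendsto (fun n : ℕ => Real.log n / n) atTop (nhds 0) :=
    Real.isLittleO_log_id_atTop.tendsto_div_nhds_zero.comp tendsto_natCast_atTop_atTop
  have hT2 : Tendsto (fun n : ℕ => Real.log (Cm n) / n) atTop (nhds 0) := by
    refine Metric.tendsto_atTop.mpr fun ε hε => ?_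
    obtain ⟨K, hK⟩ := Metric.tendsto_atTop.mp hCo (ε / 2) (by positivity)
    set M : ℝ := (Finset.range (K + 1)).sup'
      (Finset.nonempty_range_iff.mpr (Nat.succ_ne_zero K)) (fun k => Real.log (C k)) with hM
    have hM0 : 0 ≤ M := by
      rw [hM]
      exact le_trans (Real.log_nonneg (hC1 0))
        (Finset.le_sup' (fun k => Real.log (C k))
          (Finset.mem_range.mpr (show (0:ℕ) < K + 1 by omega)))
    obtain ⟨N2, hN2⟩ := Metric.tendsto_atTop.mp
      (tendsto_const_div_atTop_nhds_zero_nat M) (ε / 2) (by positivity)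
    refine ⟨max N2 1, fun n hn => ?_⟩
    have hn1 : 1 ≤ n := le_trans (le_max_right _ _) hn
    have hnpos : (0:ℝ) < n := by exact_mod_cast hn1
    obtain ⟨k, hkmem, hlog⟩ := Finset.exists_mem_eq_sup'
      (Finset.nonempty_range_iff.mpr (Nat.succ_ne_zero n)) C
    have hkn : k ≤ n := by
      have := Finset.mem_range.mp hkmem
      omega
    have hnum0 : 0 ≤ Real.log (Cm n) := Real.log_nonneg (hCm1 n)
    have key : Real.log (Cm n) ≤ M + (ε / 2) * n := by
      have hCmlog : Real.log (Cm n) = Real.log (C k) := by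
        simp only [hCm]
        exact congrArg Real.log hlog
      rw [hCmlog]
      rcases le_or_gt k K with h | h
      · have h5 : Real.log (C k) ≤ M := by
          rw [hM]
          exact Finset.le_sup' (fun k => Real.log (C k))
            (Finset.mem_range.mpr (show k < K + 1 by omega))
        nlinarith [mul_nonneg (le_of_lt (half_pos hε)) (Nat.cast_nonneg n : (0:ℝ) ≤ n)]
      · have hk' := hK k (by omega)
        rw [Real.dist_eq, sub_zero] at hk'
        have hkpos : (0:ℝ) < k := by exact_mod_cast (by omega : 0 < k)
        have h6 : Real.log (C k) ≤ (ε / 2) * k := by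
          have h7 := (abs_lt.mp hk').2
          calc Real.log (C k) = (Real.log (C k) / k) * k := by field_simp
            _ ≤ (ε / 2) * k := mul_le_mul_of_nonneg_right (le_of_lt h7) (le_of_lt hkpos)
        have hkn' : (k : ℝ) ≤ n := Nat.cast_le.mpr hkn
        nlinarith [half_pos hε]
    rw [Real.dist_eq, sub_zero, abs_of_nonneg (div_nonneg hnum0 (Nat.cast_nonneg n))]
    have h8 : Real.log (Cm n) / n ≤ M / n + ε / 2 := by
      rw [div_le_iff₀ hnpos]
      have : (M / n + ε / 2) * n = M + (ε/2) * n := by field_simp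
      rw [this]
      exact key
    have h9 := hN2 n (le_trans (le_max_left _ _) hn)
    rw [Real.dist_eq, sub_zero] at h9
    have h10 : M / n < ε / 2 := lt_of_abs_lt h9
    linarith
  have hhalf : ∀ᶠ n : ℕ in atTop, 2 * τ n ≤ n := by
    filter_upwards [hτo.eventually_lt_const (by norm_num : (0:ℝ) < 1/2),
      eventually_ge_atTop 1] with n h1 h2
    have hnpos : (0:ℝ) < n := by exact_mod_cast h2
    rw [div_lt_iff₀ hnpos] at h1
    have h3 : (2 * τ n : ℝ) < n := by push_cast; linarith
    exact_mod_cast h3.le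
  have hmtop : Tendsto (fun n : ℕ => n - τ n) atTop atTop := by
    refine tendsto_atTop.mpr fun b => ?_
    filter_upwards [hhalf, eventually_ge_atTop (2 * b)] with n h1 h2
    omega
  have hT3a : Tendsto (fun n : ℕ => Real.log (Sr P (n - τ n)) / ((n - τ n : ℕ) : ℝ))
      atTop (nhds γp) := hγ'.comp hmtop
  have hratio : Tendsto (fun n : ℕ => ((n - τ n : ℕ) : ℝ) / n) atTop (nhds 1) := by
    have h1 : Tendsto (fun n : ℕ => 1 - (τ n : ℝ) / n) atTop (nhds 1) := by
      have h0 := (tendsto_const_nhds : Tendsto (fun _ : ℕ => (1:ℝ)) atTop (nhds 1)).sub hτo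
      simpa using h0
    refine Filter.Tendsto.congr' ?_ h1
    filter_upwards [hhalf, eventually_ge_atTop 1] with n h1 h2
    have hτn : τ n ≤ n := by omega
    have hnpos : (0:ℝ) < n := by exact_mod_cast h2
    rw [Nat.cast_sub hτn]
    field_simp
  have hT3 : Tendsto (fun n : ℕ => Real.log (Sr P (n - τ n)) / n) atTop (nhds γp) := by
    have hmul := hT3a.mul hratio
    rw [mul_one] at hmul
    refine Filter.Tendsto.congr' ?_ hmul
    filter_upwards [hmtop.eventually (eventually_ge_atTop 1), eventually_ge_atTop 1]
      with n h1 h2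
    have hm0 : ((n - τ n : ℕ) : ℝ) ≠ 0 := by
      have : (0:ℕ) < n - τ n := by omega
      exact_mod_cast this.ne'
    field_simp
  have hcT : Tendsto c atTop (nhds γp) := by
    have := (hT1.add hT2).add hT3
    rw [zero_add, zero_add] at this
    refine Filter.Tendsto.congr' ?_ this
    filter_upwards with n
    simp only [hc]
    ring
  have hlimc : Tendsto (fun n : ℕ => ((c n : ℝ) : EReal)) atTop (nhds (γp : EReal)) :=
    EReal.tendsto_coe.mpr hcT
  calc Filter.limsup (fun n : ℕ =>
        ((((n : ℝ)⁻¹ : ℝ)) : EReal) * elog (P {x | returnTime n x < (n : ℕ∞)})) atTop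
      ≤ Filter.limsup (fun n : ℕ => ((c n : ℝ) : EReal)) atTop :=
        Filter.limsup_le_limsup hfc
    _ = (γp : EReal) := hlimc.limsup_eq


end RT
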